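/- Let φ*(x) be defined by φ*(0) = M(μ), φ*(x) = x(b(x) - μ) - M(b(x)) + M(μ) for 0 < x ≤ ρ_c, and φ*(x) = +∞ otherwise. Then φ* is the Legendre–Fenchel transform of φ(t) = M(μ+t) - M(μ) for t ≤ -μ, φ(t) = +∞ for t > -μ; that is, φ*(x) = sup_{t ∈ ℝ} (tx - φ(t)) for all x ≥ 0 with x ≤ ρ_c. -/

import Mathlib

/-!
On `ν ≤ 0` the series `M` converges and is convex with `M' = ρ`: termwise this is the tangent-line
inequality `e^s ≥ e^{s₀}(1 + s - s₀)`. Hence for `0 < x ≤ ρ_c` the line of slope `x = ρ(b(x))`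
through `(b(x), M(b(x)))` lies below `M`, so `t ↦ tx - φ(t)` is maximal at `t = b(x) - μ`.
For `x = 0`, `-φ(t) = M(μ) - M(μ + t) ≤ M(μ)` because `M ≥ 0`, and the bound is approached as
`t → -∞` since `M(ν) → 0` by dominated convergence.
-/

open Filter Topology

noncomputable section

/-- `M(ν) = ∑_{j ≥ 1} e^{βνj} a_j / j` with `a_j = p_{βj}(0)`, the index shifted to start at `0`. -/
def bosePressure (β : ℝ) (a : ℕ → ℝ) (ν : ℝ) : ℝ :=
  ∑' j : ℕ, (Real.exp (β * ν * ((j:ℝ)+1)) / ((j:ℝ)+1)) * a j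

def boseDensity (β : ℝ) (a : ℕ → ℝ) (ν : ℝ) : ℝ :=
  β * ∑' j : ℕ, Real.exp (β * ν * ((j:ℝ)+1)) * a j

end

lemma exp_mul_div_add_le (x y : ℝ) {k : ℝ} (hk : 0 < k) :
    Real.exp (y * k) / k + (x - y) * Real.exp (y * k) ≤ Real.exp (x * k) / k := by
  have hsplit : Real.exp (x * k) = Real.exp ((x - y) * k) * Real.exp (y * k) := by
    rw [← Real.exp_add]; ring_nf
  have hexp := Real.add_one_le_exp ((x - y) * k)
  rw [div_add' _ _ _ hk.ne', div_le_div_iff_of_pos_right hk, hsplit]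
  nlinarith [Real.exp_pos (y * k)]

section BoseSeries

variable {β : ℝ} {a : ℕ → ℝ}

lemma exp_mul_succ_le_one (hβ : 0 ≤ β) {ν : ℝ} (hν : ν ≤ 0) (j : ℕ) :
    Real.exp (β * ν * ((j:ℝ)+1)) ≤ 1 :=
  Real.exp_le_one_iff.mpr <|
    mul_nonpos_of_nonpos_of_nonneg (mul_nonpos_of_nonneg_of_nonpos hβ hν) (by positivity)

lemma summable_boseDensity_terms (ha₀ : ∀ j, 0 ≤ a j) (ha : Summable a) (hβ : 0 ≤ β)
    {ν : ℝ} (hν : ν ≤ 0) :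
    Summable fun j : ℕ => Real.exp (β * ν * ((j:ℝ)+1)) * a j :=
  ha.of_nonneg_of_le (fun j => mul_nonneg (Real.exp_pos _).le (ha₀ j))
    fun j => mul_le_of_le_one_left (ha₀ j) (exp_mul_succ_le_one hβ hν j)

lemma summable_bosePressure_terms (ha₀ : ∀ j, 0 ≤ a j) (ha : Summable a) (hβ : 0 ≤ β)
    {ν : ℝ} (hν : ν ≤ 0) :
    Summable fun j : ℕ => (Real.exp (β * ν * ((j:ℝ)+1)) / ((j:ℝ)+1)) * a j := by
  refine (summable_boseDensity_terms ha₀ ha hβ hν).of_nonneg_of_le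
    (fun j => by have := ha₀ j; positivity) fun j => ?_
  gcongr
  · exact ha₀ j
  · exact div_le_self (Real.exp_pos _).le (by simp)

lemma bosePressure_nonneg (ha₀ : ∀ j, 0 ≤ a j) (ν : ℝ) : 0 ≤ bosePressure β a ν :=
  tsum_nonneg fun j => by have := ha₀ j; positivity

/-- `M` lies above its tangent line at `ν₀`, whose slope is `M'(ν₀) = ρ(ν₀)`. -/
lemma bosePressure_add_mul_boseDensity_le (ha₀ : ∀ j, 0 ≤ a j) (ha : Summable a) (hβ : 0 ≤ β)
    {ν ν₀ : ℝ} (hν : ν ≤ 0) (hν₀ : ν₀ ≤ 0) :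
    bosePressure β a ν₀ + (ν - ν₀) * boseDensity β a ν₀ ≤ bosePressure β a ν := by
  have htangent := ((summable_bosePressure_terms ha₀ ha hβ hν₀).hasSum.add
    ((summable_boseDensity_terms ha₀ ha hβ hν₀).hasSum.mul_left ((ν - ν₀) * β)))
  rw [boseDensity, ← mul_assoc]
  refine hasSum_le (fun j => ?_) htangent (summable_bosePressure_terms ha₀ ha hβ hν).hasSum
  have := exp_mul_div_add_le (β * ν) (β * ν₀) (Nat.cast_add_one_pos j)
  calc _ = (Real.exp (β * ν₀ * ((j:ℝ)+1)) / ((j:ℝ)+1)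
          + (β * ν - β * ν₀) * Real.exp (β * ν₀ * ((j:ℝ)+1))) * a j := by ring
    _ ≤ _ := mul_le_mul_of_nonneg_right this (ha₀ j)

lemma tendsto_bosePressure_atBot (ha₀ : ∀ j, 0 ≤ a j) (ha : Summable a) (hβ : 0 < β) :
    Tendsto (bosePressure β a) atBot (𝓝 0) := by
  have hterm (j : ℕ) : Tendsto (fun ν => (Real.exp (β * ν * ((j:ℝ)+1)) / ((j:ℝ)+1)) * a j)
      atBot (𝓝 0) := by
    have hlin : Tendsto (fun ν : ℝ => β * ν * ((j:ℝ)+1)) atBot atBot :=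
      (tendsto_id.const_mul_atBot hβ).atBot_mul_const (Nat.cast_add_one_pos j)
    simpa using ((Real.tendsto_exp_atBot.comp hlin).div_const ((j:ℝ)+1)).mul_const (a j)
  have hbound : ∀ᶠ ν in atBot, ∀ j : ℕ,
      ‖(Real.exp (β * ν * ((j:ℝ)+1)) / ((j:ℝ)+1)) * a j‖ ≤ a j := by
    filter_upwards [eventually_le_atBot 0] with ν hν j
    rw [Real.norm_of_nonneg (by have := ha₀ j; positivity)]
    refine mul_le_of_le_one_left (ha₀ j) ?_
    exact (div_le_self (Real.exp_pos _).le (by simp)).trans (exp_mul_succ_le_one hβ.le hν j)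
  have := tendsto_tsum_of_dominated_convergence ha hterm hbound
  rwa [tsum_zero] at this

end BoseSeries

lemma ciSup_Iic_eq_of_tendsto_atBot {f : ℝ → ℝ} {a c : ℝ} (hle : ∀ t ≤ a, f t ≤ c)
    (hf : Tendsto f atBot (𝓝 c)) : ⨆ t : Set.Iic a, f t = c := by
  refine ciSup_eq_of_forall_le_of_forall_lt_exists_gt (fun t => hle t t.2) fun w hw => ?_
  obtain ⟨t, hwt, hta⟩ := ((hf.eventually (lt_mem_nhds hw)).and (eventually_le_atBot a)).exists
  exact ⟨⟨t, hta⟩, hwt⟩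

theorem stmt17_general (β μ : ℝ) (hβ : 0 < β)
    (p : ℝ → ℝ) (hpos : ∀ t > (0:ℝ), 0 < p t)
    (hsum : Summable fun j : ℕ => p (β * ((j:ℝ)+1)))
    (ρfun Mfun : ℝ → ℝ)
    (hρdef : ρfun = fun ν => β * ∑' j : ℕ, Real.exp (β * ν * ((j:ℝ)+1)) * p (β * ((j:ℝ)+1)))
    (hMdef : Mfun = fun ν =>
      ∑' j : ℕ, (Real.exp (β * ν * ((j:ℝ)+1)) / ((j:ℝ)+1)) * p (β * ((j:ℝ)+1)))
    (ρc : ℝ)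
    (b : ℝ → ℝ) (hb : ∀ x : ℝ, 0 < x → x ≤ ρc → b x ≤ 0 ∧ ρfun (b x) = x) :
    (∀ x : ℝ, 0 < x → x ≤ ρc →
      x * (b x - μ) - Mfun (b x) + Mfun μ
        = ⨆ t : Set.Iic (-μ), ((t:ℝ) * x - (Mfun (μ + (t:ℝ)) - Mfun μ)))
    ∧ Mfun μ = ⨆ t : Set.Iic (-μ), (0 - (Mfun (μ + (t:ℝ)) - Mfun μ)) := by
  set a : ℕ → ℝ := fun j => p (β * ((j:ℝ)+1))
  have ha₀ (j : ℕ) : 0 ≤ a j := (hpos _ (by positivity)).le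
  obtain rfl : ρfun = boseDensity β a := hρdef
  obtain rfl : Mfun = bosePressure β a := hMdef
  refine ⟨fun x hx hxc => ?_, ?_⟩
  · obtain ⟨hb₀, hρb⟩ := hb x hx hxc
    have hattained : (b x - μ) * x - (bosePressure β a (μ + (b x - μ)) - bosePressure β a μ)
        = x * (b x - μ) - bosePressure β a (b x) + bosePressure β a μ := by
      rw [add_sub_cancel]; ring
    refine (ciSup_eq_of_forall_le_of_forall_lt_exists_gt (fun t => ?_)
      fun w hw => ⟨⟨b x - μ, by simpa using hb₀⟩, hattained ▸ hw⟩).symm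
    have := bosePressure_add_mul_boseDensity_le ha₀ hsum hβ.le
      (by linarith [Set.mem_Iic.mp t.2] : μ + t ≤ 0) hb₀
    rw [hρb] at this
    linarith
  · refine (ciSup_Iic_eq_of_tendsto_atBot
      (f := fun t => 0 - (bosePressure β a (μ + t) - bosePressure β a μ)) (fun t _ => ?_) ?_).symm
    · linarith [bosePressure_nonneg ha₀ (β := β) (μ + t)]
    · simpa using ((tendsto_bosePressure_atBot ha₀ hsum hβ).comp
        (tendsto_atBot_add_const_left _ μ tendsto_id)).sub_const (bosePressure β a μ) |>.const_sub 0

/-- The rate function `φ*` is the Legendre–Fenchel transform of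
`φ(t) = M(μ+t) - M(μ)` (with `φ(t) = +∞` for `t > -μ`, so the supremum runs over
`t ≤ -μ`): for `0 < x ≤ ρ_c`, `x(b(x) - μ) - M(b(x)) + M(μ) = sup_{t ≤ -μ} (tx - φ(t))`,
and for `x = 0`, `M(μ) = sup_{t ≤ -μ} (-φ(t))`. -/
theorem stmt17 (d : ℕ) (hd : 3 ≤ d) (β μ : ℝ) (hβ : 0 < β) (hμ : μ < 0)
    (p : ℝ → ℝ) (hpos : ∀ t > (0:ℝ), 0 < p t)
    (hsum : Summable fun j : ℕ => p (β * ((j:ℝ)+1)))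
    (ρfun Mfun : ℝ → ℝ)
    (hρdef : ρfun = fun ν => β * ∑' j : ℕ, Real.exp (β * ν * ((j:ℝ)+1)) * p (β * ((j:ℝ)+1)))
    (hMdef : Mfun = fun ν =>
      ∑' j : ℕ, (Real.exp (β * ν * ((j:ℝ)+1)) / ((j:ℝ)+1)) * p (β * ((j:ℝ)+1)))
    (ρc : ℝ) (hρc : ρc = ρfun 0)
    (b : ℝ → ℝ) (hb : ∀ x : ℝ, 0 < x → x ≤ ρc → b x ≤ 0 ∧ ρfun (b x) = x) :
    (∀ x : ℝ, 0 < x → x ≤ ρc →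
      x * (b x - μ) - Mfun (b x) + Mfun μ
        = ⨆ t : Set.Iic (-μ), ((t:ℝ) * x - (Mfun (μ + (t:ℝ)) - Mfun μ)))
    ∧ Mfun μ = ⨆ t : Set.Iic (-μ), (0 - (Mfun (μ + (t:ℝ)) - Mfun μ)) :=
  stmt17_general β μ hβ p hpos hsum ρfun Mfun hρdef hMdef ρc b hb
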